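/- arXiv:1111.6181 — 8 statements merged into one kernel-verified Lean document; each statement's English description precedes it below -/
import Mathlib

section
/- Let Λ be a group and N a normal subgroup of Λ that is characteristic in Λ such that the quotient Λ/N is finite. If N has the R∞-property, then Λ has the R∞-property. -/
/-- A group `G` has the `R∞`-property if for every automorphism `φ` of `G`, the set of
`φ`-twisted conjugacy classes (orbits of `g • x = g * x * (φ g)⁻¹`) is infinite. -/
def RInfinity (G : Type*) [Group G] : Prop :=
  ∀ φ : G ≃* G, Infinite (Quot (fun x y : G => ∃ g : G, y = g * x * (φ g)⁻¹))

lemma twisted_equiv {G : Type*} [Group G] (φ : G ≃* G) :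
    Equivalence (fun x y : G => ∃ g : G, y = g * x * (φ g)⁻¹) := by
  constructor
  · intro x; exact ⟨1, by simp⟩
  · rintro x y ⟨g, rfl⟩
    exact ⟨g⁻¹, by simp [mul_assoc]⟩
  · rintro x y z ⟨g, rfl⟩ ⟨k, rfl⟩
    exact ⟨k * g, by simp [map_mul, mul_assoc]⟩

theorem stmt2 {Λ : Type*} [Group Λ] (N : Subgroup Λ) [N.Normal] [Finite (Λ ⧸ N)]
    (hchar : ∀ φ : Λ ≃* Λ, N.map φ.toMonoidHom = N)
    (h : RInfinity N) : RInfinity Λ := by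
  classical
  intro φ
  set ψ : N ≃* N := (φ.subgroupMap N).trans (MulEquiv.subgroupCongr (hchar φ)) with hψdef
  have hψ : ∀ n : N, (ψ n : Λ) = φ n := fun n => rfl
  set rN : N → N → Prop := fun x y => ∃ g : N, y = g * x * (ψ g)⁻¹ with hrN
  set rΛ : Λ → Λ → Prop := fun x y => ∃ g : Λ, y = g * x * (φ g)⁻¹ with hrΛ
  have hNinf : Infinite (Quot rN) := h ψ
  by_contra hinf
  rw [not_infinite_iff_finite] at hinf
  -- build a surjection from a finite type onto Quot rN
  let F : Quot rΛ × (Λ ⧸ N) → Quot rN := fun p =>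
    if hz : p.2.out * p.1.out * (φ p.2.out)⁻¹ ∈ N then
      Quot.mk rN ⟨p.2.out * p.1.out * (φ p.2.out)⁻¹, hz⟩
    else Quot.mk rN 1
  have hsurj : Function.Surjective F := by
    intro q
    rcases q.exists_rep with ⟨y, rfl⟩
    set c : Quot rΛ := Quot.mk rΛ (y : Λ) with hc
    have hout : Quot.mk rΛ c.out = Quot.mk rΛ (y : Λ) := c.out_eq
    have hrel : rΛ c.out (y : Λ) :=
      ((twisted_equiv φ).eqvGen_iff).mp ((Quot.eq).mp hout)
    obtain ⟨g, hg⟩ := hrel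
    refine ⟨⟨c, (g : Λ ⧸ N)⟩, ?_⟩
    set t : Λ := ((g : Λ ⧸ N)).out with ht
    have htq : ((t : Λ) : Λ ⧸ N) = (g : Λ ⧸ N) := Quotient.out_eq _
    have hm : g⁻¹ * t ∈ N := QuotientGroup.eq.mp htq.symm
    set n : Λ := g * (g⁻¹ * t) * g⁻¹ with hn
    have hnN : n ∈ N := Subgroup.Normal.conj_mem ‹N.Normal› _ hm g
    have hφn : φ n ∈ N := by
      rw [← hchar φ]; exact Subgroup.mem_map_of_mem _ hnN
    have hz : t * c.out * (φ t)⁻¹ = n * (y : Λ) * (φ n)⁻¹ := by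
      have hx : c.out = g⁻¹ * (y : Λ) * φ g := by
        rw [hg]; group
      rw [hx, hn]
      simp only [map_mul, map_inv]
      group
    have hzN : t * c.out * (φ t)⁻¹ ∈ N := by
      rw [hz]
      exact N.mul_mem (N.mul_mem hnN y.2) (N.inv_mem hφn)
    have : F ⟨c, (g : Λ ⧸ N)⟩ = Quot.mk rN ⟨t * c.out * (φ t)⁻¹, hzN⟩ := dif_pos hzN
    rw [this]
    refine (Quot.sound ?_).symm
    refine ⟨⟨n, hnN⟩, ?_⟩
    apply Subtype.ext
    push_cast [hψ]
    exact hz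
  have : Finite (Quot rN) := Finite.of_surjective F hsurj
  exact not_finite (Quot rN)
end

section
/- Let 1 → N → Λ → Γ → 1 be a short exact sequence of groups (i.e., N is a normal subgroup of Λ with quotient Λ/N isomorphic to Γ). Suppose that every group homomorphism from N to Γ is trivial, and that either Γ is hopfian (every surjective endomorphism of Γ is injective) or N is co-hopfian (every injective endomorphism of N is surjective). If Γ has the R∞-property, then Λ has the R∞-property. -/
theorem stmt3 {Λ Γ : Type*} [Group Λ] [Group Γ] (N : Subgroup Λ) [N.Normal]
    (e : (Λ ⧸ N) ≃* Γ)
    (htriv : ∀ f : N →* Γ, ∀ x : N, f x = 1)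
    (hhc : (∀ f : Γ →* Γ, Function.Surjective f → Function.Injective f) ∨
      (∀ f : N →* N, Function.Injective f → Function.Surjective f))
    (h : RInfinity Γ) : RInfinity Λ := by
  intro φ
  -- projection Λ →* Γ with kernel N
  set π : Λ →* Γ := e.toMonoidHom.comp (QuotientGroup.mk' N) with hπ
  have hker : ∀ x : Λ, π x = 1 ↔ x ∈ N := by
    intro x
    have h1 : π x = e ((QuotientGroup.mk' N) x) := rfl
    rw [h1, EmbeddingLike.map_eq_one_iff]
    simpa using QuotientGroup.eq_one_iff x
  -- φ preserves N
  have hφN : ∀ x ∈ N, φ x ∈ N := by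
    intro x hx
    have := htriv (π.comp (φ.toMonoidHom.comp N.subtype)) ⟨x, hx⟩
    simpa [hker] using this
  have hφsN : ∀ x ∈ N, φ.symm x ∈ N := by
    intro x hx
    have := htriv (π.comp (φ.symm.toMonoidHom.comp N.subtype)) ⟨x, hx⟩
    simpa [hker] using this
  have hmap : N.map φ.toMonoidHom = N := by
    apply le_antisymm
    · rintro y ⟨x, hx, rfl⟩
      exact hφN x hx
    · intro y hy
      exact ⟨φ.symm y, hφsN y hy, by simp⟩
  -- induced automorphism on Γ
  set ψ₀ : (Λ ⧸ N) ≃* (Λ ⧸ N) := QuotientGroup.congr N N φ hmap with hψ₀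
  set ψ : Γ ≃* Γ := (e.symm.trans ψ₀).trans e with hψ
  have hcomm : ∀ x : Λ, π (φ x) = ψ (π x) := by
    intro x
    show e ((QuotientGroup.mk' N) (φ x)) = e (ψ₀ (e.symm (e ((QuotientGroup.mk' N) x))))
    rw [e.symm_apply_apply]
    rfl
  -- surjection between twisted conjugacy class sets
  have hπsurj : Function.Surjective π := by
    exact e.surjective.comp (QuotientGroup.mk'_surjective N)
  have hinf := h ψ
  let F : Quot (fun x y : Λ => ∃ g : Λ, y = g * x * (φ g)⁻¹) →
      Quot (fun x y : Γ => ∃ g : Γ, y = g * x * (ψ g)⁻¹) :=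
    Quot.lift (fun x => Quot.mk _ (π x)) (by
      rintro x y ⟨g, rfl⟩
      apply Quot.sound
      exact ⟨π g, by simp [hcomm]⟩)
  have hFsurj : Function.Surjective F := by
    rintro ⟨y⟩
    obtain ⟨x, rfl⟩ := hπsurj y
    exact ⟨Quot.mk _ x, rfl⟩
  exact Infinite.of_surjective F hFsurj
end

section
/- Let Γ be a countably infinite residually finite group. Then R(φ) is infinite for every inner automorphism φ of Γ; that is, for every γ ∈ Γ, the automorphism φ(x) = γ x γ⁻¹ has infinitely many twisted conjugacy classes. -/
theorem aux_infinite_conjClasses {Γ : Type*} [Group Γ] [Infinite Γ]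
    (hrf : ∀ g : Γ, g ≠ 1 → ∃ H : Subgroup Γ, H.Normal ∧ H.FiniteIndex ∧ g ∉ H) :
    Infinite (ConjClasses Γ) := by
  by_contra hfin
  rw [not_infinite_iff_finite] at hfin
  choose rep hrep using fun c : ConjClasses Γ => c.exists_rep
  set ι := {c : ConjClasses Γ // c ≠ 1} with hι
  haveI : Finite ι := Subtype.finite
  have hex : ∀ i : ι, ∃ H : Subgroup Γ, H.Normal ∧ H.FiniteIndex ∧ rep i.1 ∉ H := by
    intro i
    apply hrf
    intro h
    apply i.2
    rw [← hrep i.1, h]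
    rfl
  choose H hnorm hfi hnm using hex
  have hFI : (⨅ i, H i).FiniteIndex := Subgroup.finiteIndex_iInf hfi
  have hbot : (⨅ i, H i) = ⊥ := by
    ext x
    simp only [Subgroup.mem_iInf, Subgroup.mem_bot]
    constructor
    · intro hx
      by_contra hx1
      have hc : ConjClasses.mk x ≠ 1 := by
        intro h
        rw [ConjClasses.one_eq_mk_one, ConjClasses.mk_eq_mk_iff_isConj, isConj_one_left] at h
        exact hx1 h
      set i : ι := ⟨ConjClasses.mk x, hc⟩
      have hconj : IsConj x (rep i.1) := by
        rw [← ConjClasses.mk_eq_mk_iff_isConj, hrep i.1]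
      obtain ⟨u, hu⟩ := isConj_iff.mp hconj
      exact hnm i (hu ▸ (hnorm i).conj_mem x (hx i) u)
    · rintro rfl i
      exact (H i).one_mem
  have : Nat.card Γ ≠ 0 := by
    have := hFI.index_ne_zero
    rwa [hbot, Subgroup.index_bot] at this
  have : Finite Γ := (Nat.card_ne_zero.mp this).2
  exact not_finite Γ

theorem stmt4 {Γ : Type*} [Group Γ] [Countable Γ] [Infinite Γ]
    (hrf : ∀ g : Γ, g ≠ 1 → ∃ H : Subgroup Γ, H.Normal ∧ H.FiniteIndex ∧ g ∉ H)
    (γ : Γ) :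
    Infinite (Quot (fun x y : Γ => ∃ g : Γ, y = g * x * (γ * g * γ⁻¹)⁻¹)) := by
  haveI := aux_infinite_conjClasses hrf
  apply Infinite.of_surjective
    (Quot.lift (fun x : Γ => ConjClasses.mk (x * γ)) ?_)
  · intro c
    obtain ⟨z, hz⟩ := c.exists_rep
    exact ⟨Quot.mk _ (z * γ⁻¹), by simpa using hz⟩
  · rintro x y ⟨g, rfl⟩
    apply ConjClasses.mk_eq_mk_iff_isConj.mpr
    apply isConj_iff.mpr
    exact ⟨g, by group⟩
end

section
/- Let n ≥ 2 and for an integer k let A(k) ∈ SL(n,ℤ) be the matrix with 1's on the diagonal, entry k in position (2,1), and 0 elsewhere (i.e., the block diagonal matrix diag(B(k), I_{n−2}) with B(k) = [[1,0],[k,1]]). If k, l ≥ 1 and there exists X ∈ SL(n,ℤ) with X · A(k) · Xᵀ = A(l), then k = l. -/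
/-!
Congruence `A ↦ X A Xᵀ` commutes with taking the skew part `A - Aᵀ`, and the skew part of the
transvection `1 + k E₂₁` is `k (E₂₁ - E₁₂)`. So `X A(k) Xᵀ = A(l)` gives
`l (E₂₁ - E₁₂) = k X (E₂₁ - E₁₂) Xᵀ`, and reading off the `(2,1)` entry shows `k ∣ l`.
Taking determinants shows `det X = ±1`, so `X⁻¹` is an integer matrix with `X⁻¹ A(l) X⁻ᵀ = A(k)`, whence also `l ∣ k`.
-/

open Matrix

namespace Matrix

variable {n R : Type*} [CommRing R]

lemma mul_sub_transpose_mul_transpose [Fintype n] {A B Y : Matrix n n R} (h : Y * A * Yᵀ = B) :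
    Y * (A - Aᵀ) * Yᵀ = B - Bᵀ := by
  rw [← h, mul_sub, sub_mul, transpose_mul, transpose_mul, transpose_transpose, mul_assoc,
    mul_assoc]

lemma transvection_sub_transpose [DecidableEq n] (i j : n) (c : R) :
    transvection i j c - (transvection i j c)ᵀ = c • (single i j 1 - (single i j 1)ᵀ) := by
  rw [transvection, transpose_add, transpose_one, add_sub_add_left_eq_sub, smul_sub,
    ← transpose_smul, smul_single, smul_eq_mul, mul_one]

variable [Fintype n] [DecidableEq n] {i j : n} {k l : R} {Y : Matrix n n R}

lemma dvd_of_mul_transvection_mul_transpose (hij : i ≠ j)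
    (h : Y * transvection i j k * Yᵀ = transvection i j l) : k ∣ l := by
  set D : Matrix n n R := single i j 1 - (single i j 1)ᵀ
  have hskew : k • (Y * D * Yᵀ) = l • D := by
    have := mul_sub_transpose_mul_transpose h
    rwa [transvection_sub_transpose, transvection_sub_transpose, Matrix.mul_smul,
      Matrix.smul_mul] at this
  have hD : D i j = 1 := by simp [D, hij.symm]
  refine ⟨(Y * D * Yᵀ) i j, ?_⟩
  simpa [hD] using (congrFun (congrFun hskew i) j).symm

lemma isUnit_det_of_mul_transvection_mul_transpose (hij : i ≠ j)
    (h : Y * transvection i j k * Yᵀ = transvection i j l) : IsUnit Y.det := by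
  have hdet := congrArg det h
  rw [det_mul, det_mul, det_transpose, det_transvection_of_ne i j hij,
    det_transvection_of_ne i j hij, mul_one] at hdet
  exact IsUnit.of_mul_eq_one _ hdet

lemma nonsing_inv_mul_mul_nonsing_inv_transpose {A B : Matrix n n R} (hY : IsUnit Y.det)
    (h : Y * A * Yᵀ = B) : Y⁻¹ * B * Y⁻¹ᵀ = A := by
  rw [← h, transpose_nonsing_inv, mul_assoc, mul_assoc,
    mul_nonsing_inv _ (isUnit_det_transpose _ hY), mul_one, ← mul_assoc, nonsing_inv_mul _ hY,
    one_mul]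

end Matrix

theorem stmt10 (n : ℕ) (hn : 2 ≤ n) (k l : ℤ) (hk : 1 ≤ k) (hl : 1 ≤ l)
    (X : Matrix (Fin n) (Fin n) ℤ)
    (h : X * (1 + Matrix.single ⟨1, by omega⟩ ⟨0, by omega⟩ k) * X.transpose =
      1 + Matrix.single ⟨1, by omega⟩ ⟨0, by omega⟩ l) :
    k = l := by
  have hij : (⟨1, by omega⟩ : Fin n) ≠ ⟨0, by omega⟩ := by simp [Fin.ext_iff]
  have hX := isUnit_det_of_mul_transvection_mul_transpose hij h
  have hkl := dvd_of_mul_transvection_mul_transpose hij h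
  have hlk := dvd_of_mul_transvection_mul_transpose hij
    (nonsing_inv_mul_mul_nonsing_inv_transpose hX h)
  exact Int.dvd_antisymm (by omega) (by omega) hkl hlk
end

section
/- Let n ≥ 3 and let τ be the automorphism of SL(n,ℤ) given by τ(X) = (Xᵀ)⁻¹. Then the Reidemeister number R(τ) is infinite; that is, there are infinitely many τ-twisted conjugacy classes in SL(n,ℤ). -/
/-!
For an involutive endomorphism `τ`, the element `τ x * x` moves by a conjugation when `x` moves
inside its `τ`-twisted conjugacy class, so `x ↦ tr (τ x * x)` is a twisted-class invariant.
For `τ X = (Xᵀ)⁻¹` and the elementary matrix `X = E₀₁(k)` this invariant equals `n - k²`, which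
takes infinitely many values.
-/

open Matrix

theorem isConj_map_mul_self_twistedConj {G : Type*} [Group G] (τ : G →* G)
    (hτ : ∀ g, τ (τ g) = g) (g x : G) :
    IsConj (τ x * x) (τ (g * x * (τ g)⁻¹) * (g * x * (τ g)⁻¹)) :=
  isConj_iff.mpr ⟨τ g, by simp only [map_mul, map_inv, hτ]; group⟩

theorem Quot.infinite_of_invariant {α β : Type*} {r : α → α → Prop} (F : α → β)
    (hF : ∀ x y, r x y → F x = F y) (hinf : (Set.range F).Infinite) : Infinite (Quot r) := by
  rw [← Set.range_quot_lift hF] at hinf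
  exact hinf.to_subtype.of_surjective _ Set.rangeFactorization_surjective

theorem Matrix.trace_transvection_mul_transvection {n R : Type*} [Fintype n] [DecidableEq n]
    [CommRing R] {i j : n} (hij : i ≠ j) (a b : R) :
    trace (transvection j i a * transvection i j b) = Fintype.card n + a * b := by
  simp only [transvection, add_mul, mul_add, one_mul, mul_one, single_mul_single_same,
    trace_add, trace_one, trace_single_eq_of_ne _ _ _ hij,
    trace_single_eq_of_ne _ _ _ hij.symm, trace_single_eq_same]
  ring

namespace Matrix.SpecialLinearGroup

variable {n R : Type*} [Fintype n] [DecidableEq n] [CommRing R]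

theorem trace_eq_of_isConj {A B : SpecialLinearGroup n R} (h : IsConj A B) :
    trace (A : Matrix n n R) = trace (B : Matrix n n R) := by
  obtain ⟨C, rfl⟩ := isConj_iff.mp h
  rw [coe_mul, coe_mul, trace_mul_cycle, ← coe_mul, inv_mul_cancel, coe_one, one_mul]

theorem transpose_inv (A : SpecialLinearGroup n R) : transpose A⁻¹ = (transpose A)⁻¹ := by
  ext : 1
  simp only [coe_transpose, coe_inv, adjugate_transpose]

theorem transpose_involutive : Function.Involutive (transpose : SpecialLinearGroup n R → _) :=
  fun A => Subtype.ext (Matrix.transpose_transpose (A : Matrix n n R))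

theorem transpose_transvection {i j : n} (hij : i ≠ j) (c : R) :
    transpose (transvection hij c) = transvection hij.symm c := by
  ext : 1
  simp only [coe_transpose, transvection_coe, transpose_add, transpose_one, transpose_single]

end Matrix.SpecialLinearGroup

theorem stmt11 (n : ℕ) (hn : 3 ≤ n)
    (τ : Matrix.SpecialLinearGroup (Fin n) ℤ ≃* Matrix.SpecialLinearGroup (Fin n) ℤ)
    (hτ : ∀ X : Matrix.SpecialLinearGroup (Fin n) ℤ,
      τ X = (Matrix.SpecialLinearGroup.transpose X)⁻¹) :
    Infinite (Quot (fun x y : Matrix.SpecialLinearGroup (Fin n) ℤ =>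
      ∃ g : Matrix.SpecialLinearGroup (Fin n) ℤ, y = g * x * (τ g)⁻¹)) := by
  open Matrix.SpecialLinearGroup in
  have hττ (g) : τ (τ g) = g := by
    rw [hτ, hτ, transpose_inv, inv_inv, SpecialLinearGroup.transpose_involutive]
  let F (x : SpecialLinearGroup (Fin n) ℤ) : ℤ :=
    trace (↑(τ x * x) : Matrix (Fin n) (Fin n) ℤ)
  refine Quot.infinite_of_invariant F ?_ ?_
  · rintro x _ ⟨g, rfl⟩
    exact trace_eq_of_isConj (isConj_map_mul_self_twistedConj τ.toMonoidHom hττ g x)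
  · have h01 : (⟨0, by omega⟩ : Fin n) ≠ ⟨1, by omega⟩ := by simp
    have hF (k : ℕ) : F (transvection h01 k) = n - k ^ 2 := by
      simp only [F, hτ, transpose_transvection, transvection_inv, coe_mul]
      exact (trace_transvection_mul_transvection h01 _ _).trans (by rw [Fintype.card_fin]; ring)
    refine Set.infinite_of_injective_forall_mem (f := fun k : ℕ => F (transvection h01 k))
      (fun k l hkl => ?_) (fun k => Set.mem_range_self _)
    simp only [hF, sub_right_inj] at hkl
    exact Nat.pow_left_injective two_ne_zero (by exact_mod_cast hkl)
end

section
/- Let n > 2 be even, let J = diag(1, ..., 1, −1) be the n × n diagonal matrix with last diagonal entry −1, and let σ be the automorphism of SL(n,ℤ) given by σ(X) = J X J⁻¹ (= J X J). Then the Reidemeister number R(σ) is infinite; that is, there are infinitely many σ-twisted conjugacy classes in SL(n,ℤ). -/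
open Matrix

theorem stmt12 (n : ℕ) (hn : 2 < n) (hev : Even n)
    (J : Matrix (Fin n) (Fin n) ℤ)
    (hJ : J = Matrix.diagonal (fun i : Fin n => if (i : ℕ) = n - 1 then (-1 : ℤ) else 1))
    (σ : Matrix.SpecialLinearGroup (Fin n) ℤ ≃* Matrix.SpecialLinearGroup (Fin n) ℤ)
    (hσ : ∀ X : Matrix.SpecialLinearGroup (Fin n) ℤ,
      (σ X : Matrix (Fin n) (Fin n) ℤ) = J * (X : Matrix (Fin n) (Fin n) ℤ) * J) :
    Infinite (Quot (fun x y : Matrix.SpecialLinearGroup (Fin n) ℤ =>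
      ∃ g : Matrix.SpecialLinearGroup (Fin n) ℤ, y = g * x * (σ g)⁻¹)) := by
  set d : Fin n → ℤ := fun i : Fin n => if (i : ℕ) = n - 1 then (-1 : ℤ) else 1 with hd
  have hJJ : J * J = 1 := by
    rw [hJ, diagonal_mul_diagonal]
    rw [show (fun i => d i * d i) = fun _ => (1:ℤ) by
      funext i; by_cases h : (i:ℕ) = n - 1 <;> simp [d, h]]
    exact diagonal_one
  set r := fun x y : Matrix.SpecialLinearGroup (Fin n) ℤ =>
      ∃ g : Matrix.SpecialLinearGroup (Fin n) ℤ, y = g * x * (σ g)⁻¹ with hr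
  have key : ∀ x y, r x y →
      trace ((x : Matrix (Fin n) (Fin n) ℤ) * J) = trace ((y : Matrix (Fin n) (Fin n) ℤ) * J) := by
    rintro x y ⟨g, rfl⟩
    have h1 : ((σ g)⁻¹ : Matrix.SpecialLinearGroup (Fin n) ℤ) = σ g⁻¹ := (map_inv σ g).symm
    have hGiG : ((g⁻¹ : Matrix.SpecialLinearGroup (Fin n) ℤ) : Matrix (Fin n) (Fin n) ℤ) *
        (g : Matrix (Fin n) (Fin n) ℤ) = 1 := by
      rw [← Matrix.SpecialLinearGroup.coe_mul, inv_mul_cancel,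
        Matrix.SpecialLinearGroup.coe_one]
    have hy : ((g * x * (σ g)⁻¹ : Matrix.SpecialLinearGroup (Fin n) ℤ) :
        Matrix (Fin n) (Fin n) ℤ) * J =
        (g : Matrix (Fin n) (Fin n) ℤ) *
          (((x : Matrix (Fin n) (Fin n) ℤ) * J) *
            ((g⁻¹ : Matrix.SpecialLinearGroup (Fin n) ℤ) : Matrix (Fin n) (Fin n) ℤ)) := by
      rw [h1, Matrix.SpecialLinearGroup.coe_mul, Matrix.SpecialLinearGroup.coe_mul, hσ g⁻¹]
      simp only [Matrix.mul_assoc, hJJ, Matrix.mul_one]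
    rw [hy, Matrix.trace_mul_comm (g : Matrix (Fin n) (Fin n) ℤ), Matrix.mul_assoc, hGiG,
      Matrix.mul_one]
  -- the special elements
  have h0 : 0 < n := by omega
  have hL : n - 1 < n := by omega
  set i0 : Fin n := ⟨0, h0⟩
  set iL : Fin n := ⟨n - 1, hL⟩
  have hne : i0 ≠ iL := Fin.ne_of_val_ne (by show (0:ℕ) ≠ n - 1; omega)
  have hi0v : (i0 : ℕ) = 0 := rfl
  have hdi0 : d i0 = 1 := by
    simp only [d, hi0v]
    rw [if_neg (by omega)]
  set A : ℤ → Matrix.SpecialLinearGroup (Fin n) ℤ := fun k =>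
    ⟨Matrix.transvection i0 iL k * Matrix.transvection iL i0 1, by
      rw [det_mul, det_transvection_of_ne _ _ hne, det_transvection_of_ne _ _ hne.symm, one_mul]⟩
    with hA
  have hAdiag : ∀ (k : ℤ) (i : Fin n),
      ((A k : Matrix (Fin n) (Fin n) ℤ)) i i = if i = i0 then 1 + k else 1 := by
    intro k i
    have hcoe : ((A k : Matrix.SpecialLinearGroup (Fin n) ℤ) : Matrix (Fin n) (Fin n) ℤ) =
        Matrix.transvection i0 iL k * Matrix.transvection iL i0 1 := rfl
    rw [hcoe]
    by_cases h : i = i0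
    · subst h
      rw [if_pos rfl, Matrix.mul_transvection_apply_same]
      simp [Matrix.transvection, Matrix.single, Matrix.one_apply, hne, hne.symm]
    · rw [if_neg h, Matrix.mul_transvection_apply_of_ne _ _ _ _ h]
      simp [Matrix.transvection, Matrix.single, Matrix.one_apply, h]
      exact fun h1 _ => absurd h1.symm h
  have htraceA : ∀ k : ℤ, trace ((A k : Matrix (Fin n) (Fin n) ℤ) * J) = k + trace J := by
    intro k
    rw [hJ, trace]
    have : ∀ i : Fin n, diag ((A k : Matrix (Fin n) (Fin n) ℤ) * Matrix.diagonal d) i =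
        (if i = i0 then k else 0) + d i := by
      intro i
      rw [diag, Matrix.mul_diagonal, hAdiag]
      by_cases h : i = i0
      · subst h; rw [if_pos rfl, if_pos rfl, hdi0]; ring
      · rw [if_neg h, if_neg h, one_mul, zero_add]
    rw [Finset.sum_congr rfl fun i _ => this i, Finset.sum_add_distrib,
      Finset.sum_ite_eq' Finset.univ i0 (fun _ => k), if_pos (Finset.mem_univ _)]
    rw [trace_diagonal]
  -- the injection
  have hinj : Function.Injective (fun k : ℤ => Quot.mk r (A k)) := by
    intro k₁ k₂ h
    have := congrArg (Quot.lift
      (fun x : Matrix.SpecialLinearGroup (Fin n) ℤ => trace ((x : Matrix (Fin n) (Fin n) ℤ) * J))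
      key) h
    simp only [Quot.lift_mk] at this
    rw [htraceA, htraceA] at this
    omega
  exact Infinite.of_injective _ hinj
end

section
/- Let n ≥ 3, let m ≥ 1, and let Γ_m denote the principal congruence subgroup of level m in SL(n,ℤ), i.e., the kernel of the reduction homomorphism SL(n,ℤ) → SL(n,ℤ/mℤ). Then for every M ∈ SL(n,ℤ), the set of traces {tr(A·M) : A ∈ Γ_m} is infinite. -/
/-!
A transvection `1 + c·E_ij` with `m ∣ c` lies in `Γ_m`, and `tr((1 + c·E_ij) M) = tr M + c·M_ji`,
so every nonzero off-diagonal entry of `M` makes the traces run through an arithmetic progression.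
If `M` is diagonal, its diagonal entries are units, and the product `(1 + m·E_ij)(1 + mk·E_ji)`
has trace against `M` equal to `tr M + m²k·M_ii`.
-/

namespace Matrix

variable {ι R : Type*} [DecidableEq ι] [Fintype ι] [CommRing R]

lemma trace_transvection_mul (i j : ι) (c : R) (M : Matrix ι ι R) :
    trace (transvection i j c * M) = trace M + c * M j i := by
  simp [transvection, add_mul, trace_single_mul]

lemma trace_transvection_mul_transvection_mul (i j : ι) (a b : R) (M : Matrix ι ι R) :
    trace (transvection i j a * transvection j i b * M) =
      trace M + a * M j i + b * M i j + a * b * M i i := by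
  rw [mul_assoc, trace_transvection_mul, trace_transvection_mul, transvection_mul_apply_same]
  ring

lemma IsDiag.isUnit_apply_self {M : Matrix ι ι R} (hM : M.IsDiag) (hdet : IsUnit M.det) (i : ι) :
    IsUnit (M i i) := by
  rw [← hM.diagonal_diag, det_diagonal] at hdet
  exact isUnit_of_dvd_unit (Finset.dvd_prod_of_mem M.diag (Finset.mem_univ i)) hdet

lemma SpecialLinearGroup.coe_transvection {i j : ι} (hij : i ≠ j) (c : R) :
    (SpecialLinearGroup.transvection hij c : Matrix ι ι R) = Matrix.transvection i j c :=
  rfl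

lemma SpecialLinearGroup.transvection_mem_ker_map {S : Type*} [CommRing S] (f : R →+* S)
    {i j : ι} (hij : i ≠ j) {c : R} (hc : f c = 0) :
    SpecialLinearGroup.transvection hij c ∈ (SpecialLinearGroup.map f).ker := by
  rw [MonoidHom.mem_ker]
  refine Subtype.ext ?_
  simp [coe_transvection, Matrix.transvection, Matrix.map_add _ (map_add f),
    Matrix.map_one _ (map_zero f) (map_one f), map_single, hc]

end Matrix

lemma Set.infinite_of_forall_add_mul_mem {s : Set ℤ} {a b : ℤ} (hb : b ≠ 0)
    (h : ∀ k, a + b * k ∈ s) : s.Infinite :=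
  Set.infinite_of_injective_forall_mem (fun _ _ hk ↦ mul_left_cancel₀ hb (add_left_cancel hk)) h

open Matrix in
theorem stmt14 (n m : ℕ) (hn : 3 ≤ n) (hm : 1 ≤ m)
    (M : Matrix.SpecialLinearGroup (Fin n) ℤ) :
    {t : ℤ | ∃ A ∈ (Matrix.SpecialLinearGroup.map (n := Fin n)
        (Int.castRingHom (ZMod m))).ker,
      Matrix.trace ((A : Matrix (Fin n) (Fin n) ℤ) *
        (M : Matrix (Fin n) (Fin n) ℤ)) = t}.Infinite := by
  have hm0 : (m : ℤ) ≠ 0 := by omega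
  have mem_ker {i j : Fin n} (hij : i ≠ j) (k : ℤ) :
      SpecialLinearGroup.transvection hij (m * k) ∈
        (SpecialLinearGroup.map (Int.castRingHom (ZMod m))).ker :=
    SpecialLinearGroup.transvection_mem_ker_map _ hij (by simp)
  by_cases hdiag : (M : Matrix (Fin n) (Fin n) ℤ).IsDiag
  · have : Nontrivial (Fin n) := Fin.nontrivial_iff_two_le.mpr (by omega)
    obtain ⟨i, j, hij⟩ := exists_pair_ne (Fin n)
    have hMii : (M : Matrix (Fin n) (Fin n) ℤ) i i ≠ 0 :=
      (hdiag.isUnit_apply_self (by simp) i).ne_zero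
    refine Set.infinite_of_forall_add_mul_mem (a := trace (M : Matrix (Fin n) (Fin n) ℤ))
      (mul_ne_zero (mul_ne_zero hm0 hm0) hMii)
      fun k ↦ ⟨_, mul_mem (mem_ker hij 1) (mem_ker hij.symm k), ?_⟩
    change trace (transvection i j ((m : ℤ) * 1) * transvection j i ((m : ℤ) * k) * _) = _
    rw [trace_transvection_mul_transvection_mul, hdiag hij, hdiag hij.symm]
    ring
  · obtain ⟨j, i, hji, hMji⟩ : ∃ j i, j ≠ i ∧ (M : Matrix (Fin n) (Fin n) ℤ) j i ≠ 0 := by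
      simpa [IsDiag, Pairwise] using hdiag
    refine Set.infinite_of_forall_add_mul_mem (a := trace (M : Matrix (Fin n) (Fin n) ℤ))
      (mul_ne_zero hm0 hMji)
      fun k ↦ ⟨_, mem_ker hji.symm k, ?_⟩
    rw [SpecialLinearGroup.coe_transvection, trace_transvection_mul]
    ring
end

section
/- Every abelian normal subgroup of SL(2,ℤ) is contained in the two-element subgroup {I, −I}, i.e., in the center of SL(2,ℤ). -/
/-!
If `x` lies in an abelian normal subgroup, it commutes with each of its conjugates. Commuting with
its conjugate by the upper unipotent `!![1, 1; 0, 1]` forces `2 c² = 0` and `(a - d)² = 0` for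
`x = !![a, b; c, d]`, and the lower unipotent likewise forces `2 b² = 0`. Over a domain with
`2 ≠ 0`, `x` is then a scalar matrix `a • 1` with `a² = det x = 1`, so `x = ±1`.
-/

namespace Matrix

variable {R : Type*} [CommRing R]

lemma transvection_zero_one_fin_two (c : R) : transvection (0 : Fin 2) 1 c = !![1, c; 0, 1] := by
  ext i j; fin_cases i <;> fin_cases j <;> simp [transvection]

lemma transvection_one_zero_fin_two (c : R) : transvection (1 : Fin 2) 0 c = !![1, 0; c, 1] := by
  ext i j; fin_cases i <;> fin_cases j <;> simp [transvection]

section CommuteConj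

variable [IsDomain R] {M : Matrix (Fin 2) (Fin 2) R}

lemma apply_one_zero_eq_zero_of_commute_conj_transvection [NeZero (2 : R)]
    (h : Commute M (transvection 0 1 1 * M * transvection 0 1 (-1))) : M 1 0 = 0 := by
  rw [transvection_zero_one_fin_two, transvection_zero_one_fin_two, eta_fin_two M] at h
  have h10 := congrFun₂ h.eq 1 0
  simp only [mul_fin_two, of_apply, cons_val', cons_val_zero, cons_val_one,
    cons_val_fin_one] at h10
  have : (2 : R) * (M 1 0 * M 1 0) = 0 := by linear_combination h10
  exact mul_self_eq_zero.mp ((mul_eq_zero.mp this).resolve_left two_ne_zero)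

lemma apply_zero_zero_eq_apply_one_one_of_commute_conj_transvection (h10 : M 1 0 = 0)
    (h : Commute M (transvection 0 1 1 * M * transvection 0 1 (-1))) : M 0 0 = M 1 1 := by
  rw [transvection_zero_one_fin_two, transvection_zero_one_fin_two, eta_fin_two M] at h
  have h01 := congrFun₂ h.eq 0 1
  simp only [mul_fin_two, of_apply, cons_val', cons_val_zero, cons_val_one,
    cons_val_fin_one] at h01
  have : (M 0 0 - M 1 1) ^ 2 = 0 := by
    linear_combination -h01 - (M 0 0 + 2 * M 0 1 - M 1 1) * h10
  exact sub_eq_zero.mp (pow_eq_zero_iff two_ne_zero |>.mp this)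

lemma apply_zero_one_eq_zero_of_commute_conj_transvection [NeZero (2 : R)]
    (h : Commute M (transvection 1 0 1 * M * transvection 1 0 (-1))) : M 0 1 = 0 := by
  rw [transvection_one_zero_fin_two, transvection_one_zero_fin_two, eta_fin_two M] at h
  have h01 := congrFun₂ h.eq 0 1
  simp only [mul_fin_two, of_apply, cons_val', cons_val_zero, cons_val_one,
    cons_val_fin_one] at h01
  have : (2 : R) * (M 0 1 * M 0 1) = 0 := by linear_combination h01
  exact mul_self_eq_zero.mp ((mul_eq_zero.mp this).resolve_left two_ne_zero)

end CommuteConj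

namespace SpecialLinearGroup

variable [IsDomain R] [NeZero (2 : R)]

lemma coe_eq_one_or_neg_one_of_commute_conj_transvection (x : SpecialLinearGroup (Fin 2) R)
    (hU : Commute x (transvection zero_ne_one 1 * x * (transvection zero_ne_one 1)⁻¹))
    (hL : Commute x (transvection one_ne_zero 1 * x * (transvection one_ne_zero 1)⁻¹)) :
    (x : Matrix (Fin 2) (Fin 2) R) = 1 ∨ (x : Matrix (Fin 2) (Fin 2) R) = -1 := by
  rw [transvection_inv] at hU hL
  replace hU := congrArg Subtype.val hU.eq
  replace hL := congrArg Subtype.val hL.eq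
  have hc : x 1 0 = 0 := apply_one_zero_eq_zero_of_commute_conj_transvection hU
  have hb : x 0 1 = 0 := apply_zero_one_eq_zero_of_commute_conj_transvection hL
  have hd : x 0 0 = x 1 1 := apply_zero_zero_eq_apply_one_one_of_commute_conj_transvection hc hU
  have hdet : x 0 0 * x 0 0 = 1 := by
    have := x.det_coe
    rwa [det_fin_two, hb, hc, ← hd, mul_zero, sub_zero] at this
  rw [eta_fin_two (x : Matrix (Fin 2) (Fin 2) R), hb, hc, ← hd]
  rcases mul_self_eq_one_iff.mp hdet with h | h
  · left; rw [h, one_fin_two]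
  · right; rw [h, one_fin_two]; ext i j; fin_cases i <;> fin_cases j <;> simp

theorem coe_eq_one_or_neg_one_of_mem_of_normal_of_commute
    (A : Subgroup (SpecialLinearGroup (Fin 2) R)) [A.Normal]
    (hab : ∀ x ∈ A, ∀ y ∈ A, x * y = y * x) {x : SpecialLinearGroup (Fin 2) R} (hx : x ∈ A) :
    (x : Matrix (Fin 2) (Fin 2) R) = 1 ∨ (x : Matrix (Fin 2) (Fin 2) R) = -1 :=
  coe_eq_one_or_neg_one_of_commute_conj_transvection x
    (hab x hx _ (Subgroup.Normal.conj_mem ‹_› x hx _))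
    (hab x hx _ (Subgroup.Normal.conj_mem ‹_› x hx _))

end SpecialLinearGroup

end Matrix

theorem stmt19 (A : Subgroup (Matrix.SpecialLinearGroup (Fin 2) ℤ)) [A.Normal]
    (hab : ∀ x ∈ A, ∀ y ∈ A, x * y = y * x) :
    ∀ x ∈ A, (x : Matrix (Fin 2) (Fin 2) ℤ) = 1 ∨
      (x : Matrix (Fin 2) (Fin 2) ℤ) = -1 :=
  fun _ hx =>
    Matrix.SpecialLinearGroup.coe_eq_one_or_neg_one_of_mem_of_normal_of_commute A hab hx
end
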